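/- Let g be a finite well-typed RDF graph over a type ι of identifiers, let t be a schema triple and b_l a nonempty finite set of schema triples with t ⪯T t_l for every t_l ∈ b_l. Then the cardinality of the natural interpretation of t is at most the minimum over t_l ∈ b_l of the cardinalities of the natural interpretations ⟦t_l⟧*; that is, the smallest statistic among the more general schema triples of b_l is an upper bound on the number of instances of t. -/
import Mathlib


/-- `c` is a strict subclass of `c'` (rdfs:subClassOf+). -/
def subClassTC {ι : Type*} (g : Set (ι × ι × ι)) (sc : ι) (c c' : ι) : Prop :=
  Relation.TransGen (fun a b => (a, sc, b) ∈ g) c c'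

/-- `p` is a strict subproperty of `p'` (rdfs:subPropertyOf+). -/
def subPropTC {ι : Type*} (g : Set (ι × ι × ι)) (sp : ι) (p p' : ι) : Prop :=
  Relation.TransGen (fun a b => (a, sp, b) ∈ g) p p'

/-- The interpretation of a class `c`. -/
def classInterp {ι : Type*} (g : Set (ι × ι × ι)) (ty sc : ι) (c : ι) : Set ι :=
  {i | (i, ty, c) ∈ g ∨ ∃ c', subClassTC g sc c' c ∧ (i, ty, c') ∈ g}

/-- The is-more-specific relation `⪯` on identifiers. -/
def moreSpecific {ι : Type*} (g : Set (ι × ι × ι)) (ty sc sp : ι) (i₁ i₂ : ι) : Prop :=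
  i₁ = i₂ ∨ subClassTC g sc i₁ i₂ ∨ subPropTC g sp i₁ i₂ ∨ i₁ ∈ classInterp g ty sc i₂

/-- `i` is an individual identifier: it occurs as the subject of a ty-triple. -/
def isIndividual {ι : Type*} (g : Set (ι × ι × ι)) (ty : ι) (i : ι) : Prop :=
  ∃ c, (i, ty, c) ∈ g

/-- `i` is a class identifier: it occurs as the object of a ty-triple or as the
subject or object of an sc-triple. -/
def isClassId {ι : Type*} (g : Set (ι × ι × ι)) (ty sc : ι) (i : ι) : Prop :=
  (∃ j, (j, ty, i) ∈ g) ∨ (∃ c, (i, sc, c) ∈ g) ∨ (∃ c, (c, sc, i) ∈ g)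

/-- `i` is a predicate identifier: it occurs as the subject or object of an sp-triple. -/
def isPredId {ι : Type*} (g : Set (ι × ι × ι)) (sp : ι) (i : ι) : Prop :=
  (∃ q, (i, sp, q) ∈ g) ∨ (∃ q, (q, sp, i) ∈ g)

/-- The graph is well-typed: individuals, classes and predicates are pairwise disjoint. -/
def WellTyped {ι : Type*} (g : Set (ι × ι × ι)) (ty sc sp : ι) : Prop :=
  (∀ i : ι, ¬(isIndividual g ty i ∧ isClassId g ty sc i)) ∧
  (∀ i : ι, ¬(isIndividual g ty i ∧ isPredId g sp i)) ∧
  (∀ i : ι, ¬(isClassId g ty sc i ∧ isPredId g sp i))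

/-- The componentwise is-more-specific relation `⪯T` on triples. -/
def tripleMoreSpecific {ι : Type*} (g : Set (ι × ι × ι)) (ty sc sp : ι)
    (t₁ t₂ : ι × ι × ι) : Prop :=
  moreSpecific g ty sc sp t₁.1 t₂.1 ∧ moreSpecific g ty sc sp t₁.2.1 t₂.2.1 ∧
    moreSpecific g ty sc sp t₁.2.2 t₂.2.2

/-- The natural interpretation of a schema triple. -/
def natTripleInterp {ι : Type*} (g : Set (ι × ι × ι)) (ty sc sp : ι)
    (t : ι × ι × ι) : Set (ι × ι × ι) :=
  {x | x ∈ g ∧ moreSpecific g ty sc sp x.1 t.1 ∧ moreSpecific g ty sc sp x.2.1 t.2.1 ∧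
       moreSpecific g ty sc sp x.2.2 t.2.2}


lemma tc_subj {ι : Type*} {r : ι → ι → Prop} {a b : ι} (h : Relation.TransGen r a b) :
    ∃ y, r a y := by
  induction h with
  | single h => exact ⟨_, h⟩
  | tail _ _ ih => exact ih

lemma tc_obj {ι : Type*} {r : ι → ι → Prop} {a b : ι} (h : Relation.TransGen r a b) :
    ∃ x, r x b := by
  induction h with
  | single h => exact ⟨_, h⟩
  | tail _ h _ => exact ⟨_, h⟩

lemma moreSpecific_trans {ι : Type*} {g : Set (ι × ι × ι)} {ty sc sp : ι}
    (hwt : WellTyped g ty sc sp) {a b c : ι}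
    (hab : moreSpecific g ty sc sp a b) (hbc : moreSpecific g ty sc sp b c) :
    moreSpecific g ty sc sp a c := by
  obtain ⟨h1, h2, h3⟩ := hwt
  rcases hab with rfl | hab | hab | hab
  · exact hbc
  · rcases hbc with rfl | hbc | hbc | hbc
    · exact Or.inr (Or.inl hab)
    · exact Or.inr (Or.inl (hab.trans hbc))
    · obtain ⟨x, hx⟩ := tc_obj hab
      obtain ⟨y, hy⟩ := tc_subj hbc
      exact absurd ⟨Or.inr (Or.inr ⟨x, hx⟩), Or.inl ⟨y, hy⟩⟩ (h3 b)
    · obtain ⟨x, hx⟩ := tc_obj hab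
      rcases hbc with hb | ⟨c', _, hb⟩ <;>
        exact absurd ⟨⟨_, hb⟩, Or.inr (Or.inr ⟨x, hx⟩)⟩ (h1 b)
  · rcases hbc with rfl | hbc | hbc | hbc
    · exact Or.inr (Or.inr (Or.inl hab))
    · obtain ⟨x, hx⟩ := tc_subj hbc
      obtain ⟨y, hy⟩ := tc_obj hab
      exact absurd ⟨Or.inr (Or.inl ⟨x, hx⟩), Or.inr ⟨y, hy⟩⟩ (h3 b)
    · exact Or.inr (Or.inr (Or.inl (hab.trans hbc)))
    · obtain ⟨y, hy⟩ := tc_obj hab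
      rcases hbc with hb | ⟨c', _, hb⟩ <;>
        exact absurd ⟨⟨_, hb⟩, Or.inr ⟨y, hy⟩⟩ (h2 b)
  · rcases hbc with rfl | hbc | hbc | hbc
    · exact Or.inr (Or.inr (Or.inr hab))
    · refine Or.inr (Or.inr (Or.inr ?_))
      rcases hab with ha | ⟨c', hc', ha⟩
      · exact Or.inr ⟨b, hbc, ha⟩
      · exact Or.inr ⟨c', hc'.trans hbc, ha⟩
    · have hcls : isClassId g ty sc b := by
        rcases hab with ha | ⟨c', hc', ha⟩
        · exact Or.inl ⟨_, ha⟩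
        · obtain ⟨z, hz⟩ := tc_obj hc'
          exact Or.inr (Or.inr ⟨z, hz⟩)
      obtain ⟨x, hx⟩ := tc_subj hbc
      exact absurd ⟨hcls, Or.inl ⟨x, hx⟩⟩ (h3 b)
    · have hcls : isClassId g ty sc b := by
        rcases hab with ha | ⟨c', hc', ha⟩
        · exact Or.inl ⟨_, ha⟩
        · obtain ⟨z, hz⟩ := tc_obj hc'
          exact Or.inr (Or.inr ⟨z, hz⟩)
      have hind : isIndividual g ty b := by
        rcases hbc with hb | ⟨c'', _, hb⟩ <;> exact ⟨_, hb⟩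
      exact absurd ⟨hind, hcls⟩ (h1 b)

theorem natTripleInterp_card_le_min {ι : Type*} (g : Set (ι × ι × ι)) (ty sc sp : ι)
    (hg : g.Finite) (hwt : WellTyped g ty sc sp) (t : ι × ι × ι)
    (b_l : Finset (ι × ι × ι)) (hne : b_l.Nonempty)
    (h : ∀ t_l ∈ b_l, tripleMoreSpecific g ty sc sp t t_l) :
    (natTripleInterp g ty sc sp t).ncard ≤
      b_l.inf' hne (fun t_l => (natTripleInterp g ty sc sp t_l).ncard) := by
  apply Finset.le_inf'
  intro tl htl
  obtain ⟨hs, hp, ho⟩ := h tl htl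
  apply Set.ncard_le_ncard
  · rintro ⟨x, y, z⟩ ⟨hxg, h1, h2, h3⟩
    exact ⟨hxg, moreSpecific_trans hwt h1 hs, moreSpecific_trans hwt h2 hp,
      moreSpecific_trans hwt h3 ho⟩
  · exact hg.subset (fun x hx => hx.1)
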